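/- arXiv:1403.2835 — 9 statements merged into one kernel-verified Lean document; each statement's English description precedes it below -/
import Mathlib

section
/- Let H be an n×n circulant matrix whose seed (first row) h satisfies h_j = 0 for all j ≥ N_f (with 1 ≤ N_f ≤ m ≤ n), and let Φ be the m×n partial circulant matrix consisting of the first m rows of an n×n circulant matrix C. Let H̃ be the m×m submatrix of H given by its first m rows and columns. Then the first m − N_f + 1 rows of the m-partial commutator [Φ,H]_m := ΦH − H̃Φ are zero. -/
/-- The n×n circulant matrix with seed `c` (paper convention `C i j = c (j - i)`). -/
def circ {n : ℕ} (c : ZMod n → ℝ) : Matrix (ZMod n) (ZMod n) ℝ :=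
  Matrix.of fun i j => c (j - i)

/-- Theorem 1 (partial commutation), matrix form: if the seed of the circulant filter
matrix `H = circ h` is supported on its first `Nf` entries, `Φ` is the partial circulant
matrix made of the first `m` rows of `circ c`, and `H̃` is the top-left `m×m` submatrix
of `H`, then the first `m - Nf + 1` rows (0-indexed rows `i` with `i + Nf ≤ m`) of the
m-partial commutator `[Φ,H]_m = Φ H - H̃ Φ` vanish. -/
theorem partial_commutator_rows_zero {n m Nf : ℕ} [NeZero n]
    (hmn : m ≤ n) (hNf1 : 1 ≤ Nf) (hNfm : Nf ≤ m)
    (c h : ZMod n → ℝ) (hsupp : ∀ j : ZMod n, Nf ≤ j.val → h j = 0)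
    (Φ : Matrix (Fin m) (ZMod n) ℝ)
    (hΦ : ∀ (i : Fin m) (j : ZMod n), Φ i j = circ c ((i.val : ZMod n)) j)
    (Htil : Matrix (Fin m) (Fin m) ℝ)
    (hHtil : ∀ i j : Fin m, Htil i j = circ h ((i.val : ZMod n)) ((j.val : ZMod n))) :
    ∀ i : Fin m, i.val + Nf ≤ m → ∀ k : ZMod n,
      (Φ * circ h - Htil * Φ) i k = 0 := by
  intro i hi k
  have hn : 0 < n := Nat.pos_of_ne_zero (NeZero.ne n)
  set ii : ZMod n := (i.val : ZMod n) with hii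
  have hiv : ii.val = i.val := ZMod.val_cast_of_lt (lt_of_lt_of_le i.isLt hmn)
  have key : ∀ j : ZMod n, (j - ii).val < Nf → j.val < m := by
    intro j hj
    have hj' : j = ii + (j - ii) := by ring
    have : j.val = (ii.val + (j - ii).val) % n := by
      conv_lhs => rw [hj']
      rw [ZMod.val_add]
    rw [hiv] at this
    rw [this, Nat.mod_eq_of_lt (by omega)]
    omega
  simp only [Matrix.sub_apply, Matrix.mul_apply, hΦ, hHtil, circ, Matrix.of_apply]
  rw [sub_eq_zero]
  have e1 : ∑ j : ZMod n, c (j - ii) * h (k - j)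
      = ∑ j : ZMod n, h (j - ii) * c (k - j) := by
    rw [← Equiv.sum_comp (Equiv.subLeft (ii + k)) (fun j => c (j - ii) * h (k - j))]
    refine Finset.sum_congr rfl fun j _ => ?_
    simp only [Equiv.subLeft_apply]
    rw [show ii + k - j - ii = k - j by ring, show k - (ii + k - j) = j - ii by ring,
      mul_comm]
  rw [e1]
  -- restrict the ZMod n sum to values < m, realized as image of Fin m
  have hinj : Function.Injective (fun j : Fin m => ((j.val : ZMod n))) := by
    intro a b hab
    simp only at hab
    have : ((a.val : ZMod n)).val = ((b.val : ZMod n)).val := congrArg ZMod.val hab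
    rw [ZMod.val_cast_of_lt (lt_of_lt_of_le a.isLt hmn),
      ZMod.val_cast_of_lt (lt_of_lt_of_le b.isLt hmn)] at this
    exact Fin.ext this
  have e2 : ∑ j ∈ Finset.univ.map ⟨fun j : Fin m => ((j.val : ZMod n)), hinj⟩,
      h (j - ii) * c (k - j) = ∑ j : ZMod n, h (j - ii) * c (k - j) := by
    apply Finset.sum_subset (Finset.subset_univ _)
    intro j _ hjnot
    have hjm : ¬ j.val < m := by
      intro hlt
      apply hjnot
      rw [Finset.mem_map]
      refine ⟨⟨j.val, hlt⟩, Finset.mem_univ _, ?_⟩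
      show ((j.val : ZMod n)) = j
      exact ZMod.natCast_rightInverse j
    have : Nf ≤ (j - ii).val := by
      by_contra hc
      push_neg at hc
      exact hjm (key j hc)
    rw [hsupp _ this, zero_mul]
  rw [← e2, Finset.sum_map]
  rfl
end

section
/- Let H be an n×n circulant matrix with seed supported on the first N_f positions, Φ the m×n partial circulant matrix from circulant C, x ∈ ℝ^n, y = Φx, and y_f = ΦHx. Then for every index i with 1 ≤ i ≤ m − N_f + 1, the i-th entry of H̃y equals the i-th entry of y_f, where H̃ is the top-left m×m submatrix of H. -/
private lemma sum_fin_of_support {n m : ℕ} [NeZero n] (hmn : m ≤ n) (A : ZMod n → ℝ)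
    (hA : ∀ j : ZMod n, m ≤ j.val → A j = 0) :
    ∑ j : ZMod n, A j = ∑ j : Fin m, A ((j.val : ZMod n)) := by
  classical
  have hinj : Function.Injective (fun j : Fin m => ((j.val : ℕ) : ZMod n)) := by
    intro a b hab
    have ha := ZMod.val_cast_of_lt (lt_of_lt_of_le a.isLt hmn)
    have hb := ZMod.val_cast_of_lt (lt_of_lt_of_le b.isLt hmn)
    apply Fin.ext
    rw [← ha, ← hb]
    simp only at hab
    rw [hab]
  have hmap : ∑ j : Fin m, A ((j.val : ZMod n)) =
      ∑ j ∈ Finset.univ.map ⟨_, hinj⟩, A j := by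
    rw [Finset.sum_map]
    rfl
  rw [hmap]
  refine (Finset.sum_subset (Finset.subset_univ _) ?_).symm
  intro j _ hj
  apply hA
  by_contra hlt
  push_neg at hlt
  apply hj
  simp only [Finset.mem_map, Finset.mem_univ, Function.Embedding.coeFn_mk, true_and]
  exact ⟨⟨j.val, hlt⟩, by simp [ZMod.natCast_val, ZMod.cast_id]⟩

/-- Theorem 1: with a circulant filter matrix `H = circ h` whose seed is supported on the
first `Nf` entries, a partial circulant sensing matrix `Φ` (first `m` rows of `circ c`),
measurements `y = Φ x` and filtered measurements `y_f = Φ (H x)`, the `i`-th entry of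
`H̃ y` equals the `i`-th entry of `y_f` for every (0-indexed) `i` with `i + Nf ≤ m`. -/
theorem filtered_measurements_eq {n m Nf : ℕ} [NeZero n]
    (hmn : m ≤ n) (hNf1 : 1 ≤ Nf) (hNfm : Nf ≤ m)
    (c h : ZMod n → ℝ) (hsupp : ∀ j : ZMod n, Nf ≤ j.val → h j = 0)
    (Φ : Matrix (Fin m) (ZMod n) ℝ)
    (hΦ : ∀ (i : Fin m) (j : ZMod n), Φ i j = circ c ((i.val : ZMod n)) j)
    (Htil : Matrix (Fin m) (Fin m) ℝ)
    (hHtil : ∀ i j : Fin m, Htil i j = circ h ((i.val : ZMod n)) ((j.val : ZMod n)))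
    (x : ZMod n → ℝ) (y yf : Fin m → ℝ)
    (hy : y = Φ.mulVec x) (hyf : yf = Φ.mulVec ((circ h).mulVec x)) :
    ∀ i : Fin m, i.val + Nf ≤ m → Htil.mulVec y i = yf i := by
  intro i hi
  subst hy hyf
  simp only [Matrix.mulVec, dotProduct, hHtil, hΦ, circ, Matrix.of_apply]
  -- LHS : ∑ j : Fin m, h (↑j - ↑i) * ∑ k, c (k - ↑j) * x k
  -- RHS : ∑ u, c (u - ↑i) * ∑ v, h (v - u) * x v
  rw [← sum_fin_of_support hmn (fun j => h (j - (i.val : ZMod n)) * ∑ k, c (k - j) * x k)]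
  · simp_rw [Finset.mul_sum]
    conv_lhs => rw [Finset.sum_comm]
    conv_rhs => rw [Finset.sum_comm]
    refine Finset.sum_congr rfl fun k _ => ?_
    refine Fintype.sum_equiv (Equiv.subLeft (k + (i.val : ZMod n))) _ _ fun j => ?_
    simp only [Equiv.subLeft_apply]
    have h1 : (k + (i.val : ZMod n) - j) - (i.val : ZMod n) = k - j := by ring
    have h2 : k - (k + (i.val : ZMod n) - j) = j - (i.val : ZMod n) := by ring
    rw [h1, h2]
    ring
  · intro j hj
    have hd : h (j - (i.val : ZMod n)) = 0 := by
      apply hsupp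
      by_contra hlt
      push_neg at hlt
      have hiv : ((i.val : ℕ) : ZMod n).val = i.val :=
        ZMod.val_cast_of_lt (lt_of_lt_of_le i.isLt hmn)
      have : j.val < m := by
        have hj' : j = (i.val : ZMod n) + (j - (i.val : ZMod n)) := by ring
        calc j.val = ((i.val : ZMod n) + (j - (i.val : ZMod n))).val := by rw [← hj']
          _ ≤ ((i.val : ZMod n)).val + (j - (i.val : ZMod n)).val := ZMod.val_add_le _ _
          _ < i.val + Nf := by rw [hiv]; omega
          _ ≤ m := hi
      omega
    rw [hd, zero_mul]
end

section
/- Let Φ be an m×n partial circulant matrix (first m rows of circulant C), x ∈ ℝ^n, y = Φx, and let x_f = (x shifted right cyclically by 1) − 2x + (x shifted left cyclically by 1) be the discrete second derivative with periodic boundary. Then for all indices i with 2 ≤ i ≤ m−1, the i-th entry of Φx_f equals the i-th entry of (y shifted right cyclically by 1) − 2y + (y shifted left cyclically by 1). -/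
/-- Compressive second finite difference: with `Φ` the first `m` rows of the circulant
matrix `circ c`, measurements `y i = (row i of C) · x`, and
`x_f = x_{→1} - 2x + x_{←1}`, for every interior index `i` (0-indexed,
`1 ≤ i ≤ m-2`) the `i`-th measurement of `x_f` equals `y_{→1} - 2y + y_{←1}` at `i`. -/
theorem compressive_second_derivative {n m : ℕ} [NeZero n] [NeZero m]
    (hmn : m ≤ n) (c x : ZMod n → ℝ)
    (y : ZMod m → ℝ) (hy : ∀ i : ZMod m, y i = ∑ j, circ c ((i.val : ZMod n)) j * x j)
    (xf : ZMod n → ℝ) (hxf : ∀ j : ZMod n, xf j = x (j - 1) - 2 * x j + x (j + 1)) :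
    ∀ i : ZMod m, 1 ≤ i.val → i.val + 1 < m →
      (∑ j, circ c ((i.val : ZMod n)) j * xf j) = y (i - 1) - 2 * y i + y (i + 1) := by
  intro i h1 h2
  have hm1 : 1 < m := lt_of_le_of_lt (Nat.le_add_left 1 i.val) h2
  haveI : Fact (1 < m) := ⟨hm1⟩
  have hvsub : (i - 1 : ZMod m).val = i.val - 1 := by
    have : (i - 1 : ZMod m) = i - (1 : ZMod m) := rfl
    rw [ZMod.val_sub, ZMod.val_one]
    rw [ZMod.val_one]; exact h1
  have hvadd : (i + 1 : ZMod m).val = i.val + 1 := by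
    rw [ZMod.val_add_of_lt]
    rw [ZMod.val_one]; rwa [ZMod.val_one]
  have hcastsub : (((i - 1 : ZMod m).val : ℕ) : ZMod n) = (i.val : ZMod n) - 1 := by
    rw [hvsub, Nat.cast_sub h1, Nat.cast_one]
  have hcastadd : (((i + 1 : ZMod m).val : ℕ) : ZMod n) = (i.val : ZMod n) + 1 := by
    rw [hvadd, Nat.cast_add, Nat.cast_one]
  set a : ZMod n := (i.val : ZMod n) with ha
  have hshiftL : (∑ j, c (j - a) * x (j - 1)) = ∑ j, c (j - (a - 1)) * x j :=
    Fintype.sum_equiv (Equiv.subRight (1 : ZMod n)) _ _ (fun j => by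
      simp [Equiv.subRight, sub_sub])
  have hshiftR : (∑ j, c (j - a) * x (j + 1)) = ∑ j, c (j - (a + 1)) * x j :=
    Fintype.sum_equiv (Equiv.addRight (1 : ZMod n)) _ _ (fun j => by
      simp [Equiv.addRight, add_sub_add_right_eq_sub])
  simp only [hy, hxf, circ, Matrix.of_apply, hcastsub, hcastadd, ← ha]
  calc (∑ j, c (j - a) * (x (j - 1) - 2 * x j + x (j + 1)))
      = (∑ j, c (j - a) * x (j - 1)) - 2 * (∑ j, c (j - a) * x j)
        + (∑ j, c (j - a) * x (j + 1)) := by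
        rw [Finset.mul_sum, ← Finset.sum_sub_distrib, ← Finset.sum_add_distrib]
        apply Finset.sum_congr rfl; intro j _; ring
    _ = _ := by rw [hshiftL, hshiftR]
end

section
/- Let C be an n×n circulant matrix with seed c, and Φ its first m rows. Let x ∈ ℝ^n and s* with 0 ≤ s* < m, z = Φx, v = Φ(x cyclically right-shifted by s*). For any s with 0 ≤ s < m, define z̃(s) = (z_1,…,z_{m−s}) and ṽ(s) = (v_{s+1},…,v_m). Then z̃(s*) = ṽ(s*), i.e., the objective ‖z̃(s) − ṽ(s)‖₂ attains the value 0 at s = s*. -/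
/-- Correctness of compressive shift retrieval: with `z = Φ x` and
`v = Φ (x right-shifted by s*)`, `0 ≤ s* < m`, the truncated vectors
`z̃(s*) = (z_1,…,z_{m-s*})` and `ṽ(s*) = (v_{s*+1},…,v_m)` coincide, so the
objective `‖z̃(s) - ṽ(s)‖₂` attains the value 0 at `s = s*`. -/
theorem shift_retrieval_zero_at_true_shift {n m : ℕ} [NeZero n]
    (hmn : m ≤ n) (c x : ZMod n → ℝ) (sstar : ℕ) (hs : sstar < m)
    (z v : ℕ → ℝ)
    (hz : ∀ i : ℕ, z i = ∑ j, circ c ((i : ZMod n)) j * x j)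
    (hv : ∀ i : ℕ, v i = ∑ j, circ c ((i : ZMod n)) j * x (j - (sstar : ZMod n))) :
    (∀ i : ℕ, i < m - sstar → z i = v (i + sstar)) ∧
      (∑ i ∈ Finset.range (m - sstar), (z i - v (i + sstar)) ^ 2) = 0 := by
  have key : ∀ i : ℕ, z i = v (i + sstar) := by
    intro i
    rw [hz, hv]
    rw [← Equiv.sum_comp (Equiv.addRight (sstar : ZMod n))
      (fun j => circ c ((i + sstar : ℕ) : ZMod n) j * x (j - (sstar : ZMod n)))]
    apply Finset.sum_congr rfl
    intro j _
    simp [circ, Nat.cast_add]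
  refine ⟨fun i _ => key i, ?_⟩
  apply Finset.sum_eq_zero
  intro i _
  rw [key i, sub_self]
  ring
end

section
/- Let Φ^{(1)},…,Φ^{(J)} be m×n matrices such that row i of Φ^{(j)} is the cyclic right-shift by one of row i of Φ^{(j−1)} for j = 2,…,J. Let h ∈ ℝ^{N_f} be a filter, H the n×n circulant matrix generated by h (seed supported on first N_f entries), and x ∈ ℝ^n with y^{(j)} = Φ^{(j)}x. Assume J ≤ n − N_f + 1. Then for every j with N_f ≤ j ≤ J, Φ^{(j)}(Hx) = Σ_{i=0}^{N_f−1} h_i y^{(j−i)}. -/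
/-- Multi-node compressive filtering: the sensing matrices `Φ^(1),…,Φ^(J)` have the
distributed circulation property (each row of `Φ^(j)` is the cyclic right-shift by one
of the same row of `Φ^(j-1)`), `H` is the n×n circulant matrix generated by the length-`Nf`
filter `h` (seed supported on the first `Nf` entries), and `y^(j) = Φ^(j) x`.  Then for
every node `j` with (1-indexed) `Nf ≤ j ≤ J` (and `J ≤ n - Nf + 1`, so no wraparound),
`Φ^(j) (H x) = ∑_{i=0}^{Nf-1} h_i y^(j-i)`. -/
theorem multinode_compressive_filtering {n m J Nf : ℕ} [NeZero n]
    (hNf1 : 1 ≤ Nf) (hNfn : Nf ≤ n) (hJ : J ≤ n - Nf + 1)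
    (h : ℕ → ℝ) (Φ : Fin J → Matrix (Fin m) (ZMod n) ℝ)
    (hshift : ∀ (j : Fin J) (hj : j.val + 1 < J) (i : Fin m) (k : ZMod n),
      Φ ⟨j.val + 1, hj⟩ i k = Φ j i (k - 1))
    (x : ZMod n → ℝ) (y : Fin J → Fin m → ℝ) (hy : ∀ j, y j = (Φ j).mulVec x)
    (H : Matrix (ZMod n) (ZMod n) ℝ)
    (hH : ∀ i k : ZMod n, H i k = if (i - k).val < Nf then h (i - k).val else 0) :
    ∀ j : Fin J, Nf ≤ j.val + 1 →
      (Φ j).mulVec (H.mulVec x) =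
        ∑ i ∈ Finset.range Nf,
          h i • y ⟨j.val - i, lt_of_le_of_lt (Nat.sub_le _ _) j.isLt⟩ := by
  intro j hj
  funext r
  -- shift lemma: Φ j r k = Φ (j - i) r (k - i)
  have key : ∀ i : ℕ, i ≤ j.val → ∀ k : ZMod n,
      Φ j r k = Φ ⟨j.val - i, lt_of_le_of_lt (Nat.sub_le _ _) j.isLt⟩ r (k - (i : ZMod n)) := by
    intro i
    induction i with
    | zero => intro _ k; simp
    | succ i ih =>
      intro hi k
      have h1 : i ≤ j.val := Nat.le_of_succ_le hi
      rw [ih h1 k]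
      have hlt : (j.val - (i + 1)) + 1 < J := by
        have : (j.val - (i + 1)) + 1 ≤ j.val := by omega
        exact lt_of_le_of_lt this j.isLt
      have hs := hshift ⟨j.val - (i + 1), lt_of_le_of_lt (Nat.sub_le _ _) j.isLt⟩ hlt r
        (k - (i : ZMod n))
      have hidx : (⟨(j.val - (i + 1)) + 1, hlt⟩ : Fin J)
          = ⟨j.val - i, lt_of_le_of_lt (Nat.sub_le _ _) j.isLt⟩ := by
        apply Fin.ext; simp; omega
      rw [hidx] at hs
      rw [hs]
      congr 1
      push_cast
      ring
  have inner : ∀ l : ZMod n, (∑ k : ZMod n, Φ j r k * H k l)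
      = ∑ i ∈ Finset.range Nf, h i * Φ j r (l + (i : ZMod n)) := by
    intro l
    have e1 : (∑ k : ZMod n, Φ j r k * H k l)
        = ∑ i : ZMod n, Φ j r (l + i) * H (l + i) l :=
      (Fintype.sum_equiv (Equiv.addLeft l) _ _ (fun i => rfl)).symm
    rw [e1]
    have e2 : ∀ i : ZMod n, Φ j r (l + i) * H (l + i) l
        = if i.val < Nf then h i.val * Φ j r (l + i) else 0 := by
      intro i
      rw [hH]
      simp only [add_sub_cancel_left]
      split <;> ring
    simp only [e2]
    rw [show (∑ i : ZMod n, if i.val < Nf then h i.val * Φ j r (l + i) else 0)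
        = ∑ t ∈ Finset.range n, if ((t : ZMod n)).val < Nf
            then h ((t : ZMod n)).val * Φ j r (l + (t : ZMod n)) else 0 from
      Finset.sum_nbij' (fun i => i.val) (fun t => (t : ZMod n))
        (fun i _ => Finset.mem_range.mpr (ZMod.val_lt i))
        (fun t _ => Finset.mem_univ _)
        (fun i _ => ZMod.natCast_zmod_val i)
        (fun t ht => ZMod.val_cast_of_lt (Finset.mem_range.mp ht))
        (fun i _ => by rw [ZMod.natCast_zmod_val])]
    rw [← Finset.sum_subset (Finset.range_subset_range.mpr hNfn)]
    · apply Finset.sum_congr rfl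
      intro t ht
      have htn : t < n := lt_of_lt_of_le (Finset.mem_range.mp ht) hNfn
      rw [ZMod.val_cast_of_lt htn, if_pos (Finset.mem_range.mp ht)]
    · intro t ht hnt
      rw [ZMod.val_cast_of_lt (Finset.mem_range.mp ht),
        if_neg (by simpa using hnt)]
  simp only [Matrix.mulVec, dotProduct, hy, Finset.sum_apply, Pi.smul_apply,
    smul_eq_mul]
  calc (∑ k : ZMod n, Φ j r k * ∑ l : ZMod n, H k l * x l)
      = ∑ l : ZMod n, (∑ k : ZMod n, Φ j r k * H k l) * x l := by
        simp only [Finset.mul_sum, Finset.sum_mul]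
        rw [Finset.sum_comm]
        simp [mul_assoc]
    _ = ∑ l : ZMod n, (∑ i ∈ Finset.range Nf, h i * Φ j r (l + (i : ZMod n))) * x l := by
        simp only [inner]
    _ = ∑ i ∈ Finset.range Nf, h i * ∑ l : ZMod n,
          Φ ⟨j.val - i, lt_of_le_of_lt (Nat.sub_le _ _) j.isLt⟩ r l * x l := by
        simp only [Finset.sum_mul]
        rw [Finset.sum_comm]
        apply Finset.sum_congr rfl
        intro i hi
        have hij : i ≤ j.val := by
          have := Finset.mem_range.mp hi; omega
        rw [Finset.mul_sum]
        apply Finset.sum_congr rfl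
        intro l _
        rw [key i hij (l + (i : ZMod n))]
        simp [mul_assoc]
end

section
/- Let Φ^{(1)},…,Φ^{(J)} be m×n matrices with the distributed circulation property (row i of Φ^{(j)} is the cyclic right-shift by one of row i of Φ^{(j−1)}), and stack them into Φ̃ ∈ ℝ^{Jm×n}. Let H be an n×n circulant matrix with seed supported on the first N_f entries, N_f ≤ J, and H_J its top-left J×J submatrix. Then the rows of the (J,m)-distributed partial commutator [Φ̃,H]_{J,m} := Φ̃H − (H_J ⊗ I_m)Φ̃ corresponding to nodes j ≥ N_f are zero. -/
open Kronecker

/-- Distributed partial commutation: stacking sensing matrices with the distributed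
circulation property into `Φ̃ ∈ ℝ^{Jm×n}`, with `H` an n×n circulant filter matrix whose
seed is supported on the first `Nf` entries and `H_J` its top-left `J×J` submatrix, the
rows of the (J,m)-distributed partial commutator `[Φ̃,H]_{J,m} = Φ̃ H - (H_J ⊗ I_m) Φ̃`
corresponding to nodes `j ≥ Nf` (1-indexed) are zero. -/
theorem distributed_partial_commutator_rows_zero {n m J Nf : ℕ} [NeZero n]
    (hNf1 : 1 ≤ Nf) (hNfJ : Nf ≤ J) (hJ : J ≤ n - Nf + 1) (hNfn : Nf ≤ n)
    (h : ZMod n → ℝ) (hsupp : ∀ k : ZMod n, Nf ≤ k.val → h k = 0)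
    (Φ : Fin J → Matrix (Fin m) (ZMod n) ℝ)
    (hshift : ∀ (j : Fin J) (hj : j.val + 1 < J) (i : Fin m) (k : ZMod n),
      Φ ⟨j.val + 1, hj⟩ i k = Φ j i (k - 1))
    (Φt : Matrix (Fin J × Fin m) (ZMod n) ℝ)
    (hΦt : ∀ (j : Fin J) (i : Fin m) (k : ZMod n), Φt (j, i) k = Φ j i k)
    (H : Matrix (ZMod n) (ZMod n) ℝ)
    (hH : ∀ i k : ZMod n, H i k = h (i - k))
    (HJ : Matrix (Fin J) (Fin J) ℝ)
    (hHJ : ∀ a b : Fin J, HJ a b = h ((a.val : ZMod n) - (b.val : ZMod n))) :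
    ∀ j : Fin J, Nf ≤ j.val + 1 → ∀ (i : Fin m) (k : ZMod n),
      (Φt * H - (HJ ⊗ₖ (1 : Matrix (Fin m) (Fin m) ℝ)) * Φt) (j, i) k = 0 := by
  intro j hj i k
  have hnpos : 0 < n := Nat.pos_of_ne_zero (NeZero.ne n)
  have hJn : J ≤ n := by omega
  have hJpos : 0 < J := lt_of_lt_of_le (Nat.lt_of_lt_of_le Nat.zero_lt_one hNf1) hNfJ
  set Φ0 : Matrix (Fin m) (ZMod n) ℝ := Φ ⟨0, hJpos⟩ with hΦ0
  -- every Φ j is a shift of Φ0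
  have hA : ∀ (v : ℕ) (hv : v < J) (i : Fin m) (k : ZMod n),
      Φ ⟨v, hv⟩ i k = Φ0 i (k - (v : ZMod n)) := by
    intro v
    induction v with
    | zero => intro hv i k; simp [hΦ0]
    | succ v ih =>
      intro hv i k
      have hv' : v < J := Nat.lt_of_succ_lt hv
      have hs := hshift ⟨v, hv'⟩ (by simpa using hv) i k
      rw [hs, ih hv' i (k - 1)]
      push_cast
      ring_nf
  have hA' : ∀ (b : Fin J) (i : Fin m) (c : ZMod n),
      Φ b i c = Φ0 i (c - (b.val : ZMod n)) := by
    intro b i c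
    have := hA b.val b.isLt i c
    simpa using this
  simp only [Matrix.sub_apply, Matrix.mul_apply, sub_eq_zero]
  rw [Fintype.sum_prod_type]
  simp only [Matrix.kroneckerMap_apply, hΦt, hH, hHJ, Matrix.one_apply, mul_ite, mul_one,
    mul_zero, ite_mul, zero_mul, Finset.sum_ite_eq, Finset.mem_univ, if_true]
  simp only [hA']
  -- reindex the left sum via x ↦ x + k
  rw [← Equiv.sum_comp (Equiv.addRight k)
    (fun x : ZMod n => Φ0 i (x - (j.val : ZMod n)) * h (x - k))]
  simp only [Equiv.coe_addRight, add_sub_cancel_right]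
  -- both sides equal a sum over `Finset.range Nf`
  have hL : ∑ t : ZMod n, Φ0 i (t + k - (j.val : ZMod n)) * h t
      = ∑ s ∈ Finset.range Nf,
          Φ0 i ((s : ZMod n) + k - (j.val : ZMod n)) * h (s : ZMod n) := by
    have hinj : ∀ a ∈ Finset.range Nf, ∀ b ∈ Finset.range Nf,
        ((a : ℕ) : ZMod n) = ((b : ℕ) : ZMod n) → a = b := by
      intro a ha b hb hab
      have ha' : a < Nf := Finset.mem_range.1 ha
      have hb' : b < Nf := Finset.mem_range.1 hb
      have := congrArg ZMod.val hab
      rwa [ZMod.val_cast_of_lt (by omega), ZMod.val_cast_of_lt (by omega)] at this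
    have himg := Finset.sum_image (s := Finset.range Nf)
      (g := fun s : ℕ => (s : ZMod n))
      (f := fun t : ZMod n => Φ0 i (t + k - (j.val : ZMod n)) * h t) hinj
    rw [← himg]
    apply (Finset.sum_subset (Finset.subset_univ _) ?_).symm
    intro t _ ht
    have hge : Nf ≤ t.val := by
      by_contra hlt
      push_neg at hlt
      exact ht (Finset.mem_image.2 ⟨t.val, Finset.mem_range.2 hlt, by
        simp [ZMod.natCast_val, ZMod.cast_id]⟩)
    rw [hsupp t hge, mul_zero]
  have hsub : ∀ s : ℕ, j.val - s < J := fun s => lt_of_le_of_lt (Nat.sub_le _ _) j.isLt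
  have hR : ∑ b : Fin J, h ((j.val : ZMod n) - (b.val : ZMod n)) * Φ0 i (k - (b.val : ZMod n))
      = ∑ s ∈ Finset.range Nf,
          Φ0 i ((s : ZMod n) + k - (j.val : ZMod n)) * h (s : ZMod n) := by
    have step1 : ∑ s ∈ Finset.range Nf,
          Φ0 i ((s : ZMod n) + k - (j.val : ZMod n)) * h (s : ZMod n)
        = ∑ s ∈ Finset.range Nf,
          (fun b : Fin J =>
            h ((j.val : ZMod n) - (b.val : ZMod n)) * Φ0 i (k - (b.val : ZMod n)))
            ((fun s : ℕ => (⟨j.val - s, hsub s⟩ : Fin J)) s) := by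
      apply Finset.sum_congr rfl
      intro s hs
      have hs' : s < Nf := Finset.mem_range.1 hs
      have hsle : s ≤ j.val := by omega
      have hcast : (((j.val - s : ℕ)) : ZMod n) = (j.val : ZMod n) - (s : ZMod n) :=
        Nat.cast_sub hsle
      simp only [hcast]
      rw [mul_comm]
      ring_nf
    have hinj : ∀ a ∈ Finset.range Nf, ∀ b ∈ Finset.range Nf,
        (fun s : ℕ => (⟨j.val - s, hsub s⟩ : Fin J)) a =
          (fun s : ℕ => (⟨j.val - s, hsub s⟩ : Fin J)) b → a = b := by
      intro a ha b hb hab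
      have ha' : a < Nf := Finset.mem_range.1 ha
      have hb' : b < Nf := Finset.mem_range.1 hb
      have := congrArg Fin.val hab
      simp only at this
      omega
    have himg := Finset.sum_image (s := Finset.range Nf)
      (g := fun s : ℕ => (⟨j.val - s, hsub s⟩ : Fin J))
      (f := fun b : Fin J =>
        h ((j.val : ZMod n) - (b.val : ZMod n)) * Φ0 i (k - (b.val : ZMod n))) hinj
    rw [step1, ← himg]
    apply (Finset.sum_subset (Finset.subset_univ _) ?_).symm
    intro b _ hb
    rcases le_or_gt b.val j.val with hle | hlt
    · have hlt2 : ¬ (j.val - b.val < Nf) := by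
        intro hcon
        apply hb
        refine Finset.mem_image.2 ⟨j.val - b.val, Finset.mem_range.2 hcon, ?_⟩
        ext
        simp only
        omega
      have hcast : ((j.val : ZMod n) - (b.val : ZMod n)) = ((j.val - b.val : ℕ) : ZMod n) := by
        rw [Nat.cast_sub hle]
      rw [hcast, hsupp _ ?_, zero_mul]
      rw [ZMod.val_cast_of_lt (by omega)]
      omega
    · have hcast : ((j.val : ZMod n) - (b.val : ZMod n))
          = ((n + j.val - b.val : ℕ) : ZMod n) := by
        rw [Nat.cast_sub (by omega)]
        push_cast
        simp
      rw [hcast, hsupp _ ?_, zero_mul]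
      rw [ZMod.val_cast_of_lt (by omega)]
      have hbJ : b.val < J := b.isLt
      omega
  rw [hL, hR]
end

section
/- Let Φ be the first m rows of an n×n circulant matrix C, x ∈ ℝ^n, y = Φx, and x_INT = ½ x_{→1} + ½ x_{←1} + x the piecewise-linear-interpolation combination (with cyclic shifts). Then for all indices i with 2 ≤ i ≤ m−1, (Φ x_INT)_i = (½ y_{→1} + ½ y_{←1} + y)_i. -/
/-- Compressive interpolation: with `Φ` the first `m` rows of the circulant `circ c`,
`y = Φ x`, and `x_INT = ½ x_{→1} + ½ x_{←1} + x`, for every interior index `i`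
(0-indexed, `1 ≤ i ≤ m-2`) one has `(Φ x_INT)_i = (½ y_{→1} + ½ y_{←1} + y)_i`. -/
theorem compressive_interpolation {n m : ℕ} [NeZero n] [NeZero m]
    (hmn : m ≤ n) (c x : ZMod n → ℝ)
    (y : ZMod m → ℝ) (hy : ∀ i : ZMod m, y i = ∑ j, circ c ((i.val : ZMod n)) j * x j)
    (xINT : ZMod n → ℝ)
    (hxINT : ∀ j : ZMod n, xINT j = (1/2) * x (j - 1) + (1/2) * x (j + 1) + x j) :
    ∀ i : ZMod m, 1 ≤ i.val → i.val + 1 < m →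
      (∑ j, circ c ((i.val : ZMod n)) j * xINT j) =
        (1/2) * y (i - 1) + (1/2) * y (i + 1) + y i := by
  intro i h1 h2
  have hm1 : 1 < m := lt_of_le_of_lt (Nat.le_add_right 1 i.val) (by omega)
  have hsub : ((i - 1 : ZMod m).val : ZMod n) = (i.val : ZMod n) - 1 := by
    have : (i - 1 : ZMod m).val = i.val - 1 := by
      have h : (i - 1 : ZMod m) = ((i.val - 1 : ℕ) : ZMod m) := by
        rw [Nat.cast_sub h1, Nat.cast_one, ZMod.natCast_rightInverse i]
      rw [h, ZMod.val_natCast, Nat.mod_eq_of_lt (by omega)]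
    rw [this]
    have : ((i.val - 1 : ℕ) : ZMod n) = ((i.val : ℕ) : ZMod n) - 1 := by
      push_cast [Nat.cast_sub h1]; ring
    rw [this]
  have hadd : ((i + 1 : ZMod m).val : ZMod n) = (i.val : ZMod n) + 1 := by
    have : (i + 1 : ZMod m).val = i.val + 1 := by
      rw [ZMod.val_add, ZMod.val_one_eq_one_mod, Nat.mod_eq_of_lt hm1,
        Nat.mod_eq_of_lt h2]
    rw [this]; push_cast; ring
  simp only [circ, Matrix.of_apply] at *
  rw [hy, hy, hy, hsub, hadd]
  have e1 : (∑ j : ZMod n, c (j - ((i.val : ZMod n) - 1)) * x j)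
      = ∑ j : ZMod n, c (j - (i.val : ZMod n)) * x (j - 1) := by
    refine Fintype.sum_equiv (Equiv.addRight 1) _ _ fun j => ?_
    simp only [Equiv.coe_addRight]
    rw [show j + 1 - ((i.val : ZMod n)) = j - ((i.val : ZMod n) - 1) from by ring,
      show j + 1 - 1 = j from by ring]
  have e2 : (∑ j : ZMod n, c (j - ((i.val : ZMod n) + 1)) * x j)
      = ∑ j : ZMod n, c (j - (i.val : ZMod n)) * x (j + 1) := by
    refine Fintype.sum_equiv (Equiv.subRight 1) _ _ fun j => ?_
    simp only [Equiv.subRight_apply]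
    rw [show j - 1 - ((i.val : ZMod n)) = j - ((i.val : ZMod n) + 1) from by ring,
      show j - 1 + 1 = j from by ring]
  rw [e1, e2, Finset.mul_sum, Finset.mul_sum, ← Finset.sum_add_distrib,
    ← Finset.sum_add_distrib]
  refine Finset.sum_congr rfl fun j _ => ?_
  rw [hxINT]; ring
end

section
/- Let H be a circulant n×n matrix with seed supported on the first N_f positions and Φ the first m rows of circulant C with N_f ≤ m. Then the last N_f − 1 rows of the m-partial commutator [Φ,H]_m = ΦH − H̃Φ are in general nonzero: specifically, if the seed entry h_{N_f} ≠ 0 and the seed of C is nonzero, then there exists an index i with m − N_f + 1 < i ≤ m and a column j such that ([Φ,H]_m)_{i,j} ≠ 0. -/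
/-!
Circulant matrices commute, so `Φ H` is the first `m` rows of `H C`, and the `(i, k)` entry of the
partial commutator is the part of `∑ⱼ H i j * C j k` over the discarded indices `j ≥ m`. In row
`i = m - Nf + 1` the band `H i j ≠ 0` is `i ≤ j ≤ m`, so exactly one discarded term survives,
`h (Nf - 1) * c (k - m)`, which is nonzero for a suitable column `k`.
-/

open Finset Matrix

theorem circ_mul_comm {n : ℕ} [NeZero n] (c h : ZMod n → ℝ) :
    circ c * circ h = circ h * circ c := by
  have hT (v : ZMod n → ℝ) : circ v = (circulant v)ᵀ := rfl
  rw [hT, hT, ← transpose_mul, ← transpose_mul, circulant_mul_comm]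

theorem Matrix.submatrix_mul_sub_submatrix_mul_apply {ι l R : Type*} [Fintype ι] [Fintype l]
    [DecidableEq ι] [NonUnitalNonAssocRing R] {A C : Matrix ι ι R} (hCA : Commute C A) (e : l ↪ ι)
    (i : l) (k : ι) :
    (C.submatrix e id * A - A.submatrix e e * C.submatrix e id) i k =
      ∑ j ∈ (univ.map e)ᶜ, A (e i) j * C j k := by
  have hfull : (C.submatrix e id * A) i k = (A * C) (e i) k := by
    rw [← hCA.eq]; rfl
  have hpartial : (A.submatrix e e * C.submatrix e id) i k =
      ∑ j ∈ univ.map e, A (e i) j * C j k := by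
    simp [mul_apply]
  rw [sub_apply, hfull, hpartial, mul_apply, ← sum_compl_add_sum (univ.map e),
    add_sub_cancel_right]

def finCastEmb {m n : ℕ} (hmn : m ≤ n) : Fin m ↪ ZMod n :=
  ⟨fun i => (i.val : ZMod n), fun i j hij => by
    have hval := congrArg ZMod.val hij
    rwa [ZMod.val_cast_of_lt (by omega), ZMod.val_cast_of_lt (by omega), Fin.val_inj] at hval⟩

@[simp]
theorem finCastEmb_apply {m n : ℕ} (hmn : m ≤ n) (i : Fin m) :
    finCastEmb hmn i = (i.val : ZMod n) := rfl

theorem mem_map_finCastEmb_iff {m n : ℕ} [NeZero n] (hmn : m ≤ n) {j : ZMod n} :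
    j ∈ univ.map (finCastEmb hmn) ↔ j.val < m := by
  constructor
  · intro hj
    obtain ⟨i, -, rfl⟩ := mem_map.mp hj
    rw [finCastEmb_apply, ZMod.val_cast_of_lt (by omega)]
    exact i.isLt
  · intro hj
    exact mem_map.mpr ⟨⟨j.val, hj⟩, mem_univ _, ZMod.natCast_zmod_val j⟩

theorem sum_compl_finCastEmb_circ_mul_circ {n m Nf : ℕ} [NeZero n] (hNf : 1 ≤ Nf)
    (hNfm : Nf ≤ m) (hmn : m < n) {c h : ZMod n → ℝ}
    (hsupp : ∀ j : ZMod n, Nf ≤ j.val → h j = 0) (k : ZMod n) :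
    ∑ j ∈ (univ.map (finCastEmb hmn.le))ᶜ, circ h ((m - Nf + 1 : ℕ) : ZMod n) j * circ c j k =
      h ((Nf - 1 : ℕ) : ZMod n) * c (k - m) := by
  have hm_val : (m : ZMod n).val = m := ZMod.val_cast_of_lt hmn
  have hm_mem : (m : ZMod n) ∈ (univ.map (finCastEmb hmn.le))ᶜ := by
    rw [mem_compl, mem_map_finCastEmb_iff, hm_val]
    exact lt_irrefl m
  rw [sum_eq_single_of_mem (m : ZMod n) hm_mem]
  · have hwidth : m - (m - Nf + 1) = Nf - 1 := by omega
    rw [circ, circ, of_apply, of_apply, ← Nat.cast_sub (by omega), hwidth]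
  · intro j hj hjm
    rw [mem_compl, mem_map_finCastEmb_iff, not_lt] at hj
    have hj' : m < j.val := by
      refine lt_of_le_of_ne hj fun hjm' => hjm ?_
      rw [← ZMod.natCast_zmod_val j, hjm']
    have hr_val : ((m - Nf + 1 : ℕ) : ZMod n).val = m - Nf + 1 := ZMod.val_cast_of_lt (by omega)
    rw [circ, of_apply, hsupp, zero_mul]
    rw [ZMod.val_sub (by omega), hr_val]
    omega

/-- Sharpness of Theorem 1: with a filter seed `h` supported on the first `Nf` entries,
`h_{Nf} ≠ 0` (0-indexed `h (Nf - 1) ≠ 0`), a nonzero sensing seed `c`, and `Φ` the first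
`m` rows of the proper partial circulant `circ c` (`m < n`), some entry of one of the
last `Nf - 1` rows (0-indexed rows `i ≥ m - Nf + 1`) of the m-partial commutator
`[Φ,H]_m = Φ H - H̃ Φ` is nonzero. -/
theorem partial_commutator_last_rows_nonzero {n m Nf : ℕ} [NeZero n]
    (hNf2 : 2 ≤ Nf) (hNfm : Nf ≤ m) (hmn : m < n)
    (c h : ZMod n → ℝ) (hsupp : ∀ j : ZMod n, Nf ≤ j.val → h j = 0)
    (hNfne : h (((Nf - 1 : ℕ) : ZMod n)) ≠ 0) (hcne : c ≠ 0)
    (Φ : Matrix (Fin m) (ZMod n) ℝ)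
    (hΦ : ∀ (i : Fin m) (j : ZMod n), Φ i j = circ c ((i.val : ZMod n)) j)
    (Htil : Matrix (Fin m) (Fin m) ℝ)
    (hHtil : ∀ i j : Fin m, Htil i j = circ h ((i.val : ZMod n)) ((j.val : ZMod n))) :
    ∃ (i : Fin m) (k : ZMod n), m - Nf + 1 ≤ i.val ∧
      (Φ * circ h - Htil * Φ) i k ≠ 0 := by
  obtain ⟨j₀, hj₀⟩ := Function.ne_iff.mp hcne
  have hΦ' : Φ = (circ c).submatrix (finCastEmb hmn.le) id := ext hΦ
  have hHtil' : Htil = (circ h).submatrix (finCastEmb hmn.le) (finCastEmb hmn.le) := ext hHtil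
  refine ⟨⟨m - Nf + 1, by omega⟩, j₀ + m, le_rfl, ?_⟩
  rw [hΦ', hHtil', submatrix_mul_sub_submatrix_mul_apply (circ_mul_comm c h),
    finCastEmb_apply, sum_compl_finCastEmb_circ_mul_circ (by omega) hNfm hmn hsupp,
    add_sub_cancel_right]
  exact mul_ne_zero hNfne hj₀
end

section
/- Let P(z) and U(z) be prediction and update filters of lengths at most N_f with periodic boundary conditions, and let the lifting step map (x_e, x_o) to (x_e + U(x_o − P(x_e)), x_o − P(x_e)) where filters act as circular convolutions on ℝ^{n}. Let Φ be an m×n partial circulant matrix. Then for all but at most 4(N_f − 1) indices, the entries of the measurements of the lifting-step output can be computed exactly by applying the same lifting step (with the corresponding shifts) to the measurement vectors Φ^{(e)}x and Φ^{(o)}x, where Φ^{(e)}, Φ^{(o)} are Φ with odd (resp. even) columns zeroed. -/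
lemma clift_sum_zmod_eq {n : ℕ} [NeZero n] (G : ZMod n → ℝ) :
    ∑ j : ZMod n, G j = ∑ j ∈ Finset.range n, G (j : ZMod n) := by
  refine Finset.sum_nbij' (fun j => j.val) (fun j => (j : ZMod n)) ?_ ?_ ?_ ?_ ?_
  · intro a _; exact Finset.mem_range.2 (ZMod.val_lt a)
  · intro a _; exact Finset.mem_univ _
  · intro a _; simp [ZMod.natCast_val, ZMod.cast_id]
  · intro a ha; exact ZMod.val_natCast_of_lt (Finset.mem_range.1 ha)
  · intro a _; simp [ZMod.natCast_val, ZMod.cast_id]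

lemma clift_full_swap {n : ℕ} [NeZero n] (c f v : ZMod n → ℝ) (i : ZMod n) :
    ∑ j : ZMod n, f (j - i) * ∑ k, c (k - j) * v k
      = ∑ k : ZMod n, c (k - i) * ∑ j, f (j - k) * v j := by
  calc ∑ j : ZMod n, f (j - i) * ∑ k, c (k - j) * v k
      = ∑ t : ZMod n, f t * ∑ k, c (k - (t + i)) * v k := by
        rw [← Equiv.sum_comp (Equiv.addRight i)
          (fun j => f (j - i) * ∑ k, c (k - j) * v k)]
        refine Finset.sum_congr rfl fun t _ => ?_
        simp [Equiv.addRight]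
    _ = ∑ t : ZMod n, ∑ k, f t * (c (k - i) * v (t + k)) := by
        refine Finset.sum_congr rfl fun t _ => ?_
        rw [← Equiv.sum_comp (Equiv.addLeft t) (fun k => c (k - (t + i)) * v k),
          Finset.mul_sum]
        refine Finset.sum_congr rfl fun k _ => ?_
        have h1 : (Equiv.addLeft t) k - (t + i) = k - i := by
          show t + k - (t + i) = k - i; ring
        rw [h1]; show f t * (c (k - i) * v (t + k)) = _; ring
    _ = ∑ k : ZMod n, ∑ t, f t * (c (k - i) * v (t + k)) := Finset.sum_comm
    _ = ∑ k : ZMod n, c (k - i) * ∑ j, f (j - k) * v j := by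
        refine Finset.sum_congr rfl fun k _ => ?_
        rw [← Equiv.sum_comp (Equiv.addRight k) (fun j => f (j - k) * v j),
          Finset.mul_sum]
        refine Finset.sum_congr rfl fun t _ => ?_
        show f t * (c (k - i) * v (t + k)) = c (k - i) *
          (f ((Equiv.addRight k) t - k) * v ((Equiv.addRight k) t))
        simp [Equiv.addRight]; ring

lemma clift_key {n m Nf : ℕ} [NeZero n] (hmn : m ≤ n)
    (c f v : ZMod n → ℝ) (hf : ∀ k : ZMod n, Nf ≤ k.val → f k = 0)
    {i : ℕ} (hi : i + Nf ≤ m) :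
    ∑ j ∈ Finset.range m, f ((j : ZMod n) - (i : ZMod n)) * (∑ k, c (k - (j : ZMod n)) * v k)
      = ∑ k, c (k - (i : ZMod n)) * (∑ j, f (j - k) * v j) := by
  rw [← clift_full_swap, clift_sum_zmod_eq
    (fun j => f (j - (i : ZMod n)) * ∑ k, c (k - j) * v k)]
  symm
  refine (Finset.sum_subset (Finset.range_subset_range.2 hmn) ?_).symm
  intro j hj hjm
  rw [Finset.mem_range] at hj
  rw [Finset.mem_range, not_lt] at hjm
  have hval : ((j : ZMod n) - (i : ZMod n)).val = j - i := by
    have h1 : (i : ℕ) ≤ j := le_trans (by omega) hjm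
    have : ((j : ZMod n) - (i : ZMod n)) = ((j - i : ℕ) : ZMod n) := by
      push_cast [Nat.cast_sub h1]; ring
    rw [this, ZMod.val_natCast_of_lt (by omega)]
  rw [hf _ (by rw [hval]; omega), zero_mul]

/-- Compressive lifting step: `p` and `u` are prediction and update filters supported on
the first `Nf` entries, acting by circular convolution (`filt f v i = ∑_j f (j-i) v j`,
the action of the circulant matrix with seed `f`).  `meas v i` is the `i`-th of the `m`
measurements of `v` taken by the partial circulant matrix with seed `c`; splitting the
signal into even and odd parts `xe, xo` (so `meas xe = Φ^(e) x`, `meas xo = Φ^(o) x`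
with odd resp. even columns zeroed), the lifting step outputs `d = xo - P(xe)` and
`s = xe + U(d)`.  Then, except for at most `4(Nf-1)` indices, the measurements of the
lifting-step output are obtained by applying the same lifting step directly to the
measurement vectors, using the measurement-domain filters `mfilt`. -/
theorem compressive_lifting_step {n m Nf : ℕ} [NeZero n]
    (hmn : m ≤ n) (hNf1 : 1 ≤ Nf)
    (c p u : ZMod n → ℝ)
    (hp : ∀ k : ZMod n, Nf ≤ k.val → p k = 0)
    (hu : ∀ k : ZMod n, Nf ≤ k.val → u k = 0)
    (x : ZMod n → ℝ)
    (meas : (ZMod n → ℝ) → ℕ → ℝ)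
    (hmeas : ∀ v (i : ℕ), meas v i = ∑ j, c (j - (i : ZMod n)) * v j)
    (filt : (ZMod n → ℝ) → (ZMod n → ℝ) → ZMod n → ℝ)
    (hfilt : ∀ f v (i : ZMod n), filt f v i = ∑ j, f (j - i) * v j)
    (mfilt : (ZMod n → ℝ) → (ℕ → ℝ) → ℕ → ℝ)
    (hmfilt : ∀ f y (i : ℕ),
      mfilt f y i = ∑ j ∈ Finset.range m, f ((j : ZMod n) - (i : ZMod n)) * y j)
    (xe xo : ZMod n → ℝ)
    (hxe : ∀ j : ZMod n, xe j = if Even j.val then x j else 0)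
    (hxo : ∀ j : ZMod n, xo j = if Even j.val then 0 else x j)
    (d s : ZMod n → ℝ)
    (hd : ∀ j, d j = xo j - filt p xe j)
    (hs : ∀ j, s j = xe j + filt u d j) :
    ∃ S : Finset ℕ, S.card ≤ 4 * (Nf - 1) ∧
      ∀ i : ℕ, i < m → i ∉ S →
        meas d i = meas xo i - mfilt p (meas xe) i ∧
        meas s i = meas xe i +
          mfilt u (fun k => meas xo k - mfilt p (meas xe) k) i := by
  have eq1 : ∀ i' : ℕ, i' + Nf ≤ m →
      meas d i' = meas xo i' - mfilt p (meas xe) i' := by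
    intro i' hi'
    rw [hmeas d i', hmeas xo i', hmfilt p (meas xe) i']
    simp only [hmeas]
    rw [clift_key hmn c p xe hp hi', ← Finset.sum_sub_distrib]
    refine Finset.sum_congr rfl fun j _ => ?_
    rw [hd, hfilt]; ring
  refine ⟨Finset.Ico (m - 2 * (Nf - 1)) m, by rw [Nat.card_Ico]; omega, ?_⟩
  intro i him hiS
  rw [Finset.mem_Ico, not_and] at hiS
  have hi2 : i + 2 * (Nf - 1) < m := by
    rcases le_or_gt (m - 2 * (Nf - 1)) i with h | h
    · exact absurd him (hiS h)
    · omega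
  have hi1 : i + Nf ≤ m := by omega
  refine ⟨eq1 i hi1, ?_⟩
  have hu0 : ∀ k : ℕ, k < m → ¬ (k + Nf ≤ m) →
      u ((k : ZMod n) - (i : ZMod n)) = 0 := by
    intro k hkm hkc
    apply hu
    rcases le_or_gt i k with h | h
    · have heq : ((k : ZMod n) - (i : ZMod n)) = ((k - i : ℕ) : ZMod n) := by
        push_cast [Nat.cast_sub h]; ring
      rw [heq, ZMod.val_natCast_of_lt (by omega)]; omega
    · have hle : i ≤ k + n := by omega
      have heq : ((k : ZMod n) - (i : ZMod n)) = ((k + n - i : ℕ) : ZMod n) := by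
        push_cast [Nat.cast_sub hle, ZMod.natCast_self]; ring
      rw [heq, ZMod.val_natCast_of_lt (by omega)]; omega
  have eq3 : mfilt u (fun k => meas xo k - mfilt p (meas xe) k) i
      = mfilt u (meas d) i := by
    rw [hmfilt, hmfilt]
    refine Finset.sum_congr rfl fun k hk => ?_
    rw [Finset.mem_range] at hk
    by_cases hz : u ((k : ZMod n) - (i : ZMod n)) = 0
    · rw [hz, zero_mul, zero_mul]
    · have hkNf : k + Nf ≤ m := by
        by_contra hcon; exact hz (hu0 k hk hcon)
      rw [eq1 k hkNf]
  rw [eq3, hmeas s i, hmeas xe i, hmfilt u (meas d) i]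
  simp only [hmeas]
  rw [clift_key hmn c u d hu hi1, ← Finset.sum_add_distrib]
  refine Finset.sum_congr rfl fun j _ => ?_
  rw [hs, hfilt]; ring
end
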